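/- For finite nonnegative Borel measures μ, ν on a Polish space X with finite first moment, the Wasserstein-type distance W₁(μ,ν) := W_{1,m}(μ̄_m, ν̄_m) (where m ≥ μ(X) ∨ ν(X), μ̄_m := μ + (m−μ(X))δ_∂, ν̄_m := ν + (m−ν(X))δ_∂, and W_{1,m} is the classical 1-Wasserstein distance between measures of total mass m on the extended space X̄) does not depend on the choice of m ≥ μ(X) ∨ ν(X). -/

import Mathlib

open MeasureTheory ENNReal

noncomputable instance optionMeasurableSpace {X : Type*} [m : MeasurableSpace X] :
    MeasurableSpace (Option X) := m.map some

/-- The extended distance on `X ∪ {∂}` with `d(x,∂) = d(x,x₀) + 1`. -/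
noncomputable def extDist {X : Type*} [MetricSpace X] (x₀ : X) :
    Option X → Option X → ℝ
  | some x, some y => dist x y
  | some x, none => dist x x₀ + 1
  | none, some y => dist y x₀ + 1
  | none, none => 0

/-- The embedding of a finite measure `μ` on `X` as a measure of total mass `m`
on `X ∪ {∂}`, putting the missing mass `m - μ(X)` at the cemetery point `∂`. -/
noncomputable def extendMeasure {X : Type*} [MeasurableSpace X]
    (μ : Measure X) (m : ℝ≥0∞) : Measure (Option X) :=
  μ.map some + (m - μ Set.univ) • Measure.dirac (none : Option X)

/-- Classical Wasserstein-1 distance (via couplings) between two measures of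
equal total mass on the extended space `X ∪ {∂}`. -/
noncomputable def W1m {X : Type*} [MetricSpace X] [MeasurableSpace X] (x₀ : X)
    (μ' ν' : Measure (Option X)) : ℝ≥0∞ :=
  ⨅ (π : Measure (Option X × Option X)) (_ : π.fst = μ') (_ : π.snd = ν'),
    ∫⁻ p, ENNReal.ofReal (extDist x₀ p.1 p.2) ∂π

/-!
A coupling `π` of the extended measures at any mass level `m'` can be turned, at no extra cost,
into a coupling at any finite level `m ≥ μ(X) ∨ ν(X)`: keep the part of `π` moving `X` to `X`,
and replace everything passing through `∂` by the normalised product of the mass sent from `X`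
to `∂` and the mass sent from `∂` to `X`, both topped up at `∂` to the common mass
`m - π(X × X)`. As `d(u,v) ≤ d(u,∂) + d(∂,v)` and `d(∂,∂) = 0`, the product costs at most what
was removed. So `W_{1,m} ≤ W_{1,m'}` whatever the order of `m` and `m'`.
-/

lemma ENNReal.add_tsub_add_eq_tsub_of_le {a b m : ℝ≥0∞} (ha : a ≠ ∞) (h : a + b ≤ m) :
    b + (m - (a + b)) = m - a := by
  rw [tsub_add_eq_tsub_tsub, add_tsub_cancel_of_le (ENNReal.le_sub_of_add_le_left ha h)]

namespace MeasureTheory.Measure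

open Set

variable {α β : Type*} [MeasurableSpace α] [MeasurableSpace β]

lemma restrict_prod_add_restrict_prod_compl (ρ : Measure (α × β)) {s : Set α} {t : Set β}
    (hs : MeasurableSet s) (ht : MeasurableSet t) :
    ρ.restrict (s ×ˢ t) + ρ.restrict (s ×ˢ tᶜ) = ρ.restrict (s ×ˢ univ) := by
  rw [← restrict_union (Set.disjoint_prod.2 (Or.inr disjoint_compl_right)) (hs.prod ht.compl),
    ← Set.prod_union, Set.union_compl_self]

lemma restrict_prod_add_restrict_compl_prod (ρ : Measure (α × β)) {s : Set α} {t : Set β}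
    (hs : MeasurableSet s) (ht : MeasurableSet t) :
    ρ.restrict (s ×ˢ t) + ρ.restrict (sᶜ ×ˢ t) = ρ.restrict (univ ×ˢ t) := by
  rw [← restrict_union (Set.disjoint_prod.2 (Or.inl disjoint_compl_right)) (hs.compl.prod ht),
    ← Set.union_prod, Set.union_compl_self]

lemma restrict_prod_univ_add_restrict_prod_le (ρ : Measure (α × β)) {s t : Set α}
    (hs : MeasurableSet s) (hts : Disjoint s t) (u : Set β) :
    ρ.restrict (s ×ˢ univ) + ρ.restrict (t ×ˢ u) ≤ ρ :=
  calc _ ≤ ρ.restrict (s ×ˢ univ) + ρ.restrict (s ×ˢ univ)ᶜ := by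
        gcongr
        exact fun p hp hp' => hts.ne_of_mem hp'.1 hp.1 rfl
    _ = ρ := restrict_add_restrict_compl (hs.prod .univ)

lemma fst_restrict_prod_univ (ρ : Measure (α × β)) {s : Set α} (hs : MeasurableSet s) :
    (ρ.restrict (s ×ˢ univ)).fst = ρ.fst.restrict s := by
  rw [Set.prod_univ, fst, fst, restrict_map measurable_fst hs]

lemma snd_restrict_univ_prod (ρ : Measure (α × β)) {t : Set β} (ht : MeasurableSet t) :
    (ρ.restrict (univ ×ˢ t)).snd = ρ.snd.restrict t := by
  rw [Set.univ_prod, snd, snd, restrict_map measurable_snd ht]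

noncomputable def productCoupling (κ₁ : Measure α) (κ₂ : Measure β) : Measure (α × β) :=
  (κ₁ univ)⁻¹ • κ₁.prod κ₂

lemma fst_productCoupling {κ₁ : Measure α} {κ₂ : Measure β} [IsFiniteMeasure κ₁] [SFinite κ₂]
    (h : κ₁ univ = κ₂ univ) : (productCoupling κ₁ κ₂).fst = κ₁ := by
  rw [productCoupling, fst, Measure.map_smul, map_fst_prod, ← h, smul_smul]
  rcases eq_or_ne (κ₁ univ) 0 with h0 | h0
  · simp [measure_univ_eq_zero.1 h0]
  · rw [ENNReal.inv_mul_cancel h0 (measure_ne_top _ _), one_smul]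

lemma snd_productCoupling {κ₁ : Measure α} {κ₂ : Measure β} [IsFiniteMeasure κ₁] [SFinite κ₂]
    (h : κ₁ univ = κ₂ univ) : (productCoupling κ₁ κ₂).snd = κ₂ := by
  rw [productCoupling, snd, Measure.map_smul, map_snd_prod, smul_smul]
  rcases eq_or_ne (κ₁ univ) 0 with h0 | h0
  · simp [measure_univ_eq_zero.1 (h ▸ h0)]
  · rw [ENNReal.inv_mul_cancel h0 (measure_ne_top _ _), one_smul]

lemma lintegral_add_comp_fst_snd (ρ : Measure (α × β)) {f : α → ℝ≥0∞} {g : β → ℝ≥0∞}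
    (hf : Measurable f) (hg : Measurable g) :
    ∫⁻ p, f p.1 + g p.2 ∂ρ = ∫⁻ a, f a ∂ρ.fst + ∫⁻ b, g b ∂ρ.snd := by
  rw [lintegral_add_left (by fun_prop : Measurable fun p : α × β => f p.1), fst, snd,
    lintegral_map hf measurable_fst, lintegral_map hg measurable_snd]

lemma lintegral_productCoupling_le {c : α → β → ℝ≥0∞} {o₁ : α} {o₂ : β}
    (hc_left : Measurable fun a => c a o₂) (hc_right : Measurable (c o₁))
    (hc_triangle : ∀ a b, c a b ≤ c a o₂ + c o₁ b) {κ₁ : Measure α} {κ₂ : Measure β}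
    [IsFiniteMeasure κ₁] [SFinite κ₂] (h : κ₁ univ = κ₂ univ) :
    ∫⁻ p, c p.1 p.2 ∂productCoupling κ₁ κ₂ ≤ ∫⁻ a, c a o₂ ∂κ₁ + ∫⁻ b, c o₁ b ∂κ₂ :=
  calc _ ≤ ∫⁻ p, c p.1 o₂ + c o₁ p.2 ∂productCoupling κ₁ κ₂ :=
        lintegral_mono fun p => hc_triangle p.1 p.2
    _ = _ := by
        rw [lintegral_add_comp_fst_snd _ hc_left hc_right, fst_productCoupling h,
          snd_productCoupling h]

noncomputable def fillAt (μ : Measure α) (a : α) (m : ℝ≥0∞) : Measure α :=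
  μ.restrict {a}ᶜ + (m - μ {a}ᶜ) • dirac a

lemma measure_univ_add_smul_dirac_eq_tsub {μ ν₁ ν₂ : Measure α} {a : α} {m : ℝ≥0∞}
    (hm : m ≠ ∞) (h : ν₁ + ν₂ = μ.restrict {a}ᶜ) (hμ : μ {a}ᶜ ≤ m) :
    (ν₂ + (m - μ {a}ᶜ) • dirac a) univ = m - ν₁ univ := by
  have hsplit : μ {a}ᶜ = ν₁ univ + ν₂ univ := by
    rw [← restrict_apply_univ, ← h, add_apply]
  rw [add_apply, smul_apply, dirac_apply_of_mem (mem_univ a), smul_eq_mul, mul_one, hsplit]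
  exact ENNReal.add_tsub_add_eq_tsub_of_le
    (ne_top_of_le_ne_top hm (le_self_add.trans (hsplit ▸ hμ))) (hsplit ▸ hμ)

end MeasureTheory.Measure

section Rerouting

open Set

variable {Y : Type*} [MeasurableSpace Y]

lemma lintegral_fst_restrict_prod_singleton_add_smul_dirac (π : Measure (Y × Y)) {s : Set Y}
    {o : Y} (hs : MeasurableSet s) (ho : MeasurableSet {o}) {c : Y → Y → ℝ≥0∞}
    (hc : Measurable fun u => c u o) (hc_self : c o o = 0) (r : ℝ≥0∞) :
    ∫⁻ u, c u o ∂((π.restrict (s ×ˢ {o})).fst + r • Measure.dirac o)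
      = ∫⁻ p, c p.1 p.2 ∂π.restrict (s ×ˢ {o}) := by
  rw [lintegral_add_measure, lintegral_smul_measure, lintegral_dirac' o hc, hc_self, smul_zero,
    add_zero, Measure.fst, lintegral_map hc measurable_fst]
  refine lintegral_congr_ae ?_
  filter_upwards [ae_restrict_mem (hs.prod ho)] with p hp
  rw [hp.2]

lemma lintegral_snd_restrict_singleton_prod_add_smul_dirac (π : Measure (Y × Y)) {t : Set Y}
    {o : Y} (ht : MeasurableSet t) (ho : MeasurableSet {o}) {c : Y → Y → ℝ≥0∞}
    (hc : Measurable (c o)) (hc_self : c o o = 0) (r : ℝ≥0∞) :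
    ∫⁻ v, c o v ∂((π.restrict ({o} ×ˢ t)).snd + r • Measure.dirac o)
      = ∫⁻ p, c p.1 p.2 ∂π.restrict ({o} ×ˢ t) := by
  rw [lintegral_add_measure, lintegral_smul_measure, lintegral_dirac' o hc, hc_self, smul_zero,
    add_zero, Measure.snd, lintegral_map hc measurable_snd]
  refine lintegral_congr_ae ?_
  filter_upwards [ae_restrict_mem (ho.prod ht)] with p hp
  rw [hp.1]

theorem exists_fillAt_coupling_lintegral_le {c : Y → Y → ℝ≥0∞} {o : Y}
    (hc_left : Measurable fun u => c u o) (hc_right : Measurable (c o)) (hc_self : c o o = 0)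
    (hc_triangle : ∀ u v, c u v ≤ c u o + c o v) (ho : MeasurableSet {o})
    (π : Measure (Y × Y)) {m : ℝ≥0∞} (hm : m ≠ ∞) (hπ₁ : π.fst {o}ᶜ ≤ m)
    (hπ₂ : π.snd {o}ᶜ ≤ m) :
    ∃ π' : Measure (Y × Y), π'.fst = π.fst.fillAt o m ∧ π'.snd = π.snd.fillAt o m ∧
      ∫⁻ p, c p.1 p.2 ∂π' ≤ ∫⁻ p, c p.1 p.2 ∂π := by
  set T : Set Y := {o}ᶜ
  have hT : MeasurableSet T := ho.compl
  set πstay := π.restrict (T ×ˢ T)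
  set πexit := π.restrict (T ×ˢ {o})
  set πenter := π.restrict ({o} ×ˢ T)
  set κ₁ := πexit.fst + (m - π.fst T) • Measure.dirac o
  set κ₂ := πenter.snd + (m - π.snd T) • Measure.dirac o
  have hstay_exit : πstay + πexit = π.restrict (T ×ˢ univ) := by
    rw [add_comm]
    exact Measure.restrict_prod_add_restrict_prod_compl π hT ho
  have hstay_enter : πstay + πenter = π.restrict (univ ×ˢ T) := by
    rw [add_comm]
    exact Measure.restrict_prod_add_restrict_compl_prod π ho hT
  have hfst : πstay.fst + πexit.fst = π.fst.restrict T := by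
    rw [← Measure.fst_add, hstay_exit, Measure.fst_restrict_prod_univ π hT]
  have hsnd : πstay.snd + πenter.snd = π.snd.restrict T := by
    rw [← Measure.snd_add, hstay_enter, Measure.snd_restrict_univ_prod π hT]
  have hκ₁ : κ₁ univ = m - πstay.fst univ :=
    Measure.measure_univ_add_smul_dirac_eq_tsub hm hfst hπ₁
  have hκ₂ : κ₂ univ = m - πstay.fst univ := by
    rw [Measure.fst_univ, ← Measure.snd_univ]
    exact Measure.measure_univ_add_smul_dirac_eq_tsub hm hsnd hπ₂
  have : IsFiniteMeasure κ₁ := ⟨hκ₁ ▸ (tsub_le_self.trans_lt hm.lt_top)⟩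
  have : IsFiniteMeasure κ₂ := ⟨hκ₂ ▸ (tsub_le_self.trans_lt hm.lt_top)⟩
  have hκ : κ₁ univ = κ₂ univ := hκ₁.trans hκ₂.symm
  refine ⟨πstay + Measure.productCoupling κ₁ κ₂, ?_, ?_, ?_⟩
  · rw [Measure.fst_add, Measure.fst_productCoupling hκ, ← add_assoc, hfst]
    rfl
  · rw [Measure.snd_add, Measure.snd_productCoupling hκ, ← add_assoc, hsnd]
    rfl
  · have hprod : ∫⁻ p, c p.1 p.2 ∂Measure.productCoupling κ₁ κ₂
        ≤ ∫⁻ p, c p.1 p.2 ∂πexit + ∫⁻ p, c p.1 p.2 ∂πenter := by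
      refine (Measure.lintegral_productCoupling_le hc_left hc_right hc_triangle hκ).trans_eq ?_
      rw [lintegral_fst_restrict_prod_singleton_add_smul_dirac π hT ho hc_left hc_self,
        lintegral_snd_restrict_singleton_prod_add_smul_dirac π hT ho hc_right hc_self]
    have hsub : πstay + πexit + πenter ≤ π := by
      rw [hstay_exit]
      exact Measure.restrict_prod_univ_add_restrict_prod_le π hT disjoint_compl_left T
    calc ∫⁻ p, c p.1 p.2 ∂(πstay + Measure.productCoupling κ₁ κ₂)
        ≤ ∫⁻ p, c p.1 p.2 ∂πstay + (∫⁻ p, c p.1 p.2 ∂πexit + ∫⁻ p, c p.1 p.2 ∂πenter) := by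
          rw [lintegral_add_measure]
          gcongr
      _ = ∫⁻ p, c p.1 p.2 ∂(πstay + πexit + πenter) := by
          rw [lintegral_add_measure, lintegral_add_measure, add_assoc]
      _ ≤ ∫⁻ p, c p.1 p.2 ∂π := lintegral_mono' hsub le_rfl

end Rerouting

lemma preimage_some_singleton_none {X : Type*} : (some ⁻¹' {none} : Set X) = ∅ :=
  Set.eq_empty_of_forall_notMem fun _ h => Option.some_ne_none _ h

section Cemetery

open Set

variable {X : Type*} [MeasurableSpace X]

lemma measurable_option_of_comp_some {γ : Type*} [MeasurableSpace γ] {f : Option X → γ}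
    (hf : Measurable (f ∘ some)) : Measurable f :=
  fun _ hs => hf hs

lemma measurable_some : Measurable (some : X → Option X) :=
  fun _ hs => hs

lemma measurableSet_singleton_none : MeasurableSet ({none} : Set (Option X)) := by
  change MeasurableSet (some ⁻¹' {none})
  rw [preimage_some_singleton_none]
  exact .empty

lemma extendMeasure_apply_compl_none (μ : Measure X) (m : ℝ≥0∞) :
    extendMeasure μ m {none}ᶜ = μ univ := by
  rw [extendMeasure, Measure.add_apply, Measure.map_apply measurable_some
    measurableSet_singleton_none.compl, Measure.smul_apply,
    Measure.dirac_apply' _ measurableSet_singleton_none.compl]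
  simp [Set.preimage_compl, preimage_some_singleton_none]

lemma extendMeasure_eq_fillAt (μ : Measure X) (m m' : ℝ≥0∞) :
    extendMeasure μ m = (extendMeasure μ m').fillAt none m := by
  rw [Measure.fillAt, extendMeasure_apply_compl_none, extendMeasure, extendMeasure,
    Measure.restrict_add, Measure.restrict_smul,
    restrict_dirac' measurableSet_singleton_none.compl,
    Measure.restrict_map measurable_some measurableSet_singleton_none.compl]
  simp [Set.preimage_compl, preimage_some_singleton_none]

end Cemetery

section ExtendedDistance

variable {X : Type*} [MetricSpace X]

lemma extDist_le_add_none (x₀ : X) (u v : Option X) :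
    extDist x₀ u v ≤ extDist x₀ u none + extDist x₀ none v := by
  rcases u with _ | x <;> rcases v with _ | y <;> simp only [extDist]
  · norm_num
  · linarith
  · linarith
  · linarith [dist_triangle_right x y x₀]

lemma ofReal_extDist_le_add_none (x₀ : X) (u v : Option X) :
    ENNReal.ofReal (extDist x₀ u v)
      ≤ ENNReal.ofReal (extDist x₀ u none) + ENNReal.ofReal (extDist x₀ none v) :=
  (ENNReal.ofReal_le_ofReal (extDist_le_add_none x₀ u v)).trans ENNReal.ofReal_add_le

end ExtendedDistance

section Wasserstein

open Set

variable {X : Type*} [MetricSpace X] [MeasurableSpace X] [OpensMeasurableSpace X]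

lemma measurable_ofReal_extDist_none_left (x₀ : X) :
    Measurable fun u => ENNReal.ofReal (extDist x₀ u none) :=
  measurable_option_of_comp_some (by
    change Measurable fun x : X => ENNReal.ofReal (dist x x₀ + 1)
    fun_prop)

lemma measurable_ofReal_extDist_none_right (x₀ : X) :
    Measurable fun v => ENNReal.ofReal (extDist x₀ none v) :=
  measurable_option_of_comp_some (by
    change Measurable fun x : X => ENNReal.ofReal (dist x x₀ + 1)
    fun_prop)

theorem W1m_extendMeasure_le (x₀ : X) (μ ν : Measure X) {m : ℝ≥0∞} (hm : m ≠ ∞)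
    (hμ : μ univ ≤ m) (hν : ν univ ≤ m) (m' : ℝ≥0∞) :
    W1m x₀ (extendMeasure μ m) (extendMeasure ν m)
      ≤ W1m x₀ (extendMeasure μ m') (extendMeasure ν m') := by
  unfold W1m
  refine le_iInf₂ fun π hπ₁ => le_iInf fun hπ₂ => ?_
  obtain ⟨π', hπ'₁, hπ'₂, hcost⟩ := exists_fillAt_coupling_lintegral_le
    (measurable_ofReal_extDist_none_left x₀) (measurable_ofReal_extDist_none_right x₀)
    (by simp [extDist]) (ofReal_extDist_le_add_none x₀) measurableSet_singleton_none π hm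
    (by rwa [hπ₁, extendMeasure_apply_compl_none]) (by rwa [hπ₂, extendMeasure_apply_compl_none])
  rw [hπ₁, ← extendMeasure_eq_fillAt] at hπ'₁
  rw [hπ₂, ← extendMeasure_eq_fillAt] at hπ'₂
  exact iInf₂_le_of_le π' hπ'₁ (iInf_le_of_le hπ'₂ hcost)

end Wasserstein

theorem W1_independent_of_mass_general {X : Type*} [MetricSpace X]
    [MeasurableSpace X] [BorelSpace X] (x₀ : X)
    (μ ν : Measure X)
    (m₁ m₂ : ℝ≥0∞) (hm₁ : m₁ ≠ ∞) (hm₂ : m₂ ≠ ∞)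
    (h₁ : μ Set.univ ⊔ ν Set.univ ≤ m₁) (h₂ : μ Set.univ ⊔ ν Set.univ ≤ m₂) :
    W1m x₀ (extendMeasure μ m₁) (extendMeasure ν m₁)
      = W1m x₀ (extendMeasure μ m₂) (extendMeasure ν m₂) :=
  le_antisymm
    (W1m_extendMeasure_le x₀ μ ν hm₁ (le_sup_left.trans h₁) (le_sup_right.trans h₁) m₂)
    (W1m_extendMeasure_le x₀ μ ν hm₂ (le_sup_left.trans h₂) (le_sup_right.trans h₂) m₁)

/-- the Wasserstein-type distance `W₁(μ,ν) = W_{1,m}(μ̄_m, ν̄_m)` on finite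
nonnegative measures with finite first moment does not depend on the choice of the
mass level `m ≥ μ(X) ∨ ν(X)`. -/
theorem W1_independent_of_mass {X : Type*} [MetricSpace X] [Nonempty X]
    [CompleteSpace X] [SecondCountableTopology X]
    [MeasurableSpace X] [BorelSpace X] (x₀ : X)
    (μ ν : Measure X) [IsFiniteMeasure μ] [IsFiniteMeasure ν]
    (hμ : ∫⁻ x, ENNReal.ofReal (dist x x₀) ∂μ ≠ ∞)
    (hν : ∫⁻ x, ENNReal.ofReal (dist x x₀) ∂ν ≠ ∞)
    (m₁ m₂ : ℝ≥0∞) (hm₁ : m₁ ≠ ∞) (hm₂ : m₂ ≠ ∞)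
    (h₁ : μ Set.univ ⊔ ν Set.univ ≤ m₁) (h₂ : μ Set.univ ⊔ ν Set.univ ≤ m₂) :
    W1m x₀ (extendMeasure μ m₁) (extendMeasure ν m₁)
      = W1m x₀ (extendMeasure μ m₂) (extendMeasure ν m₂) :=
  W1_independent_of_mass_general x₀ μ ν m₁ m₂ hm₁ hm₂ h₁ h₂
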